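/- Let h(x) = Σ_{j=1}^n C_j (x − d_j)₊ with C_j ≥ 0, 0 ≤ d_1 ≤ … ≤ d_n, Σ C_j ≤ 1. Then for a non-negative random variable X with survival function S_X and distortion function g, ϱ_g(h(X)) = Σ_{j=1}^n C_j ∫_{d_j}^∞ g(S_X(x)) dx. -/

import Mathlib

/-!
Write `H x = ∑ⱼ Cⱼ (x - dⱼ)₊` and let `a` be the smallest knot `dⱼ` with `Cⱼ ≠ 0`.
Then `H` vanishes on `(-∞, a]` and maps `(a, ∞)` strictly increasingly onto `(0, ∞)`,
so for `x > a` the events `{H(X) > H(x)}` and `{X > x}` coincide. Substituting `y = H(x)`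
in the distortion integral, with `H' = ∑ⱼ Cⱼ 𝟙_{(dⱼ, ∞)}` off the knots, splits it into
the integrals `Cⱼ ∫_{dⱼ}^∞ g(S_X)`.
-/

open MeasureTheory Set Finset

section Hinge

variable {ι : Type*} [Fintype ι] {C d : ι → ℝ}

noncomputable def hingeSum (C d : ι → ℝ) (x : ℝ) : ℝ := ∑ j, C j * max (x - d j) 0

noncomputable def hingeSlope (C d : ι → ℝ) (x : ℝ) : ℝ :=
  ∑ j, (Ioi (d j)).indicator (fun _ => C j) x

theorem continuous_hingeSum : Continuous (hingeSum C d) := by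
  unfold hingeSum
  fun_prop

theorem hingeSum_mono (hC : ∀ j, 0 ≤ C j) : Monotone (hingeSum C d) := fun _ _ hxy =>
  Finset.sum_le_sum fun j _ =>
    mul_le_mul_of_nonneg_left (max_le_max (sub_le_sub_right hxy _) le_rfl) (hC j)

theorem hingeSum_eq_zero {x : ℝ} (hx : ∀ j, C j ≠ 0 → x ≤ d j) : hingeSum C d x = 0 :=
  Finset.sum_eq_zero fun j _ => by
    by_cases hj : C j = 0
    · rw [hj, zero_mul]
    · rw [max_eq_right (sub_nonpos.mpr (hx j hj)), mul_zero]

theorem mul_sub_le_hingeSum (hC : ∀ j, 0 ≤ C j) (j : ι) (x : ℝ) :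
    C j * (x - d j) ≤ hingeSum C d x :=
  (mul_le_mul_of_nonneg_left (le_max_left _ _) (hC j)).trans <|
    Finset.single_le_sum (f := fun i => C i * max (x - d i) 0)
      (fun i _ => mul_nonneg (hC i) (le_max_right _ _)) (Finset.mem_univ j)

theorem strictMonoOn_hingeSum (hC : ∀ j, 0 ≤ C j) {j : ι} (hj : 0 < C j) :
    StrictMonoOn (hingeSum C d) (Ici (d j)) := fun x (hjx : d j ≤ x) y _ hxy => by
  refine Finset.sum_lt_sum (fun i _ => mul_le_mul_of_nonneg_left
    (max_le_max (sub_le_sub_right hxy.le _) le_rfl) (hC i)) ⟨j, Finset.mem_univ j, ?_⟩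
  rw [max_eq_left (by linarith), max_eq_left (by linarith)]
  exact mul_lt_mul_of_pos_left (by linarith) hj

theorem hingeSum_lt_hingeSum_iff (hC : ∀ j, 0 ≤ C j) {j : ι} (hj : 0 < C j) {x y : ℝ}
    (hjx : d j ≤ x) : hingeSum C d x < hingeSum C d y ↔ x < y :=
  ⟨fun h => not_le.mp fun hyx => h.not_ge (hingeSum_mono hC hyx),
    fun hxy => strictMonoOn_hingeSum hC hj hjx (hjx.trans hxy.le) hxy⟩

theorem hingeSum_image_Ioi (hC : ∀ j, 0 ≤ C j) {j : ι} (hj : 0 < C j)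
    (hmin : ∀ i, C i ≠ 0 → d j ≤ d i) : hingeSum C d '' Ioi (d j) = Set.Ioi 0 := by
  have hzero : hingeSum C d (d j) = 0 := hingeSum_eq_zero hmin
  refine Subset.antisymm ?_ fun y (hy : 0 < y) => ?_
  · rintro _ ⟨x, hx, rfl⟩
    exact hzero ▸ strictMonoOn_hingeSum hC hj self_mem_Ici (Ioi_subset_Ici_self hx) hx
  · set b := d j + y / C j
    have hyb : y ≤ hingeSum C d b := by
      have := mul_sub_le_hingeSum (d := d) hC j b
      rwa [add_sub_cancel_left, mul_div_cancel₀ _ hj.ne'] at this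
    have hjb : d j ≤ b := le_add_of_nonneg_right (div_pos hy hj).le
    obtain ⟨x, hx, hxy⟩ := intermediate_value_Ioc hjb continuous_hingeSum.continuousOn
      (show y ∈ Ioc (hingeSum C d (d j)) (hingeSum C d b) from ⟨hzero ▸ hy, hyb⟩)
    exact ⟨x, hx.1, hxy⟩

theorem hasDerivAt_mul_max_sub (c b : ℝ) {x : ℝ} (hx : x ≠ b) :
    HasDerivAt (fun y => c * max (y - b) 0) ((Ioi b).indicator (fun _ => c) x) x := by
  rcases hx.lt_or_gt with hxb | hbx
  · rw [indicator_of_notMem (Set.notMem_Ioi.mpr hxb.le)]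
    refine (hasDerivAt_const x (0 : ℝ)).congr_of_eventuallyEq ?_
    filter_upwards [Iio_mem_nhds hxb] with y (hy : y < b)
    rw [max_eq_right (by linarith), mul_zero]
  · rw [indicator_of_mem (Set.mem_Ioi.mpr hbx)]
    refine (by simpa using ((hasDerivAt_id x).sub_const b).const_mul c :
      HasDerivAt (fun y => c * (y - b)) c x).congr_of_eventuallyEq ?_
    filter_upwards [Ioi_mem_nhds hbx] with y (hy : b < y)
    rw [max_eq_left (by linarith)]

theorem hasDerivAt_hingeSum {x : ℝ} (hx : x ∉ range d) :
    HasDerivAt (hingeSum C d) (hingeSlope C d x) x :=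
  HasDerivAt.fun_sum fun j _ => hasDerivAt_mul_max_sub (C j) (d j) fun h => hx ⟨j, h.symm⟩

theorem hingeSlope_nonneg (hC : ∀ j, 0 ≤ C j) (x : ℝ) : 0 ≤ hingeSlope C d x :=
  Finset.sum_nonneg fun j _ => indicator_nonneg (fun _ _ => hC j) x

theorem integral_Ioi_zero_eq_integral_hingeSlope_mul (hC : ∀ j, 0 ≤ C j) {j : ι} (hj : 0 < C j)
    (hmin : ∀ i, C i ≠ 0 → d j ≤ d i) (φ : ℝ → ℝ) :
    ∫ y in Set.Ioi 0, φ y = ∫ x in Ioi (d j), hingeSlope C d x * φ (hingeSum C d x) := by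
  set s := Ioi (d j) \ range d
  have hknots : (range d).Finite := finite_range d
  have hs : s =ᵐ[volume] Ioi (d j) :=
    sdiff_ae_eq_self.mpr (measure_mono_null inter_subset_right (hknots.measure_zero _))
  have himage : hingeSum C d '' s =ᵐ[volume] Set.Ioi 0 := by
    rw [← hingeSum_image_Ioi hC hj hmin]
    refine ae_eq_set.mpr ⟨?_, ?_⟩
    · rw [sdiff_eq_empty.mpr (image_mono sdiff_subset), measure_empty]
    · refine measure_mono_null (fun y hy => ?_) ((hknots.image (hingeSum C d)).measure_zero _)
      obtain ⟨x, hx, rfl⟩ := hy.1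
      exact ⟨x, not_not.mp fun hxd => hy.2 ⟨x, ⟨hx, hxd⟩, rfl⟩, rfl⟩
  have hinj : InjOn (hingeSum C d) s :=
    ((strictMonoOn_hingeSum hC hj).mono (sdiff_subset.trans Ioi_subset_Ici_self)).injOn
  calc ∫ y in Set.Ioi 0, φ y = ∫ y in hingeSum C d '' s, φ y :=
        setIntegral_congr_set himage.symm
    _ = ∫ x in s, |hingeSlope C d x| • φ (hingeSum C d x) :=
      integral_image_eq_integral_abs_deriv_smul (measurableSet_Ioi.diff hknots.measurableSet)
        (fun x hx => (hasDerivAt_hingeSum hx.2).hasDerivWithinAt) hinj φ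
    _ = ∫ x in Ioi (d j), hingeSlope C d x * φ (hingeSum C d x) := by
      simp only [abs_of_nonneg (hingeSlope_nonneg hC _), smul_eq_mul]
      exact setIntegral_congr_set hs

theorem integral_hingeSlope_mul {F : ℝ → ℝ} {b : ℝ} (hF : IntegrableOn F (Ioi b))
    (hb : ∀ i, C i ≠ 0 → b ≤ d i) :
    ∫ x in Ioi b, hingeSlope C d x * F x = ∑ i, C i * ∫ x in Ioi (d i), F x := by
  have hsplit : ∀ x,
      hingeSlope C d x * F x = ∑ i, (Ioi (d i)).indicator (fun x => C i * F x) x :=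
    fun x => by simp only [hingeSlope, Finset.sum_mul, indicator_mul_left]
  simp only [hsplit]
  rw [integral_finsetSum _ fun i _ =>
    ((hF.const_mul (C i)).indicator measurableSet_Ioi)]
  refine Finset.sum_congr rfl fun i _ => ?_
  rw [setIntegral_indicator measurableSet_Ioi, Ioi_inter_Ioi, integral_const_mul]
  by_cases hi : C i = 0
  · rw [hi, zero_mul, zero_mul]
  · rw [sup_eq_right.mpr (hb i hi)]

end Hinge

theorem distortion_of_combination_general
    {Ω : Type*} [MeasureSpace Ω] [IsProbabilityMeasure (volume : Measure Ω)]
    (X : Ω → ℝ)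
    (g : ℝ → ℝ) (hg0 : g 0 = 0)
    (hint : IntegrableOn (fun x => g ((volume {ω | x < X ω}).toReal)) (Ioi 0))
    (n : ℕ) (C d : Fin n → ℝ)
    (hC : ∀ j, 0 ≤ C j) (hd0 : ∀ j, 0 ≤ d j) :
    ∫ y in Ioi (0:ℝ),
        g ((volume {ω | y < ∑ j, C j * max (X ω - d j) 0}).toReal)
      = ∑ j, C j * ∫ x in Ioi (d j), g ((volume {ω | x < X ω}).toReal) := by
  by_cases hC0 : ∀ j, C j = 0
  · refine (setIntegral_eq_zero_of_forall_eq_zero fun y (hy : 0 < y) => ?_).trans (by simp [hC0])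
    simp [hC0, hy.not_gt, hg0]
  obtain ⟨j, hj, hmin⟩ : ∃ j, C j ≠ 0 ∧ ∀ i, C i ≠ 0 → d j ≤ d i := by
    push Not at hC0
    obtain ⟨j, hj, hmin⟩ := Finset.exists_min_image ({i | C i ≠ 0} : Finset _) d
      (by simpa [Finset.Nonempty] using hC0)
    exact ⟨j, by simpa using hj, fun i hi => hmin i (by simpa using hi)⟩
  have hjpos : 0 < C j := (hC j).lt_of_ne' hj
  calc _ = ∫ x in Ioi (d j), hingeSlope C d x *
          g ((volume {ω | hingeSum C d x < hingeSum C d (X ω)}).toReal) :=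
        integral_Ioi_zero_eq_integral_hingeSlope_mul hC hjpos hmin _
    _ = ∫ x in Ioi (d j), hingeSlope C d x * g ((volume {ω | x < X ω}).toReal) :=
        setIntegral_congr_fun measurableSet_Ioi fun x (hx : d j < x) => by
          simp only [hingeSum_lt_hingeSum_iff hC hjpos hx.le]
    _ = _ := integral_hingeSlope_mul (hint.mono_set (Ioi_subset_Ioi (hd0 j))) hmin

/-- For `h(x) = Σ_j C_j (x − d_j)₊` with `C_j ≥ 0`, ordered `d_j ≥ 0` and
`Σ C_j ≤ 1`, the distortion risk measure of `h(X)` is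
`Σ_j C_j ∫_{d_j}^∞ g(S_X(x)) dx`. -/
theorem distortion_of_combination
    {Ω : Type*} [MeasureSpace Ω] [IsProbabilityMeasure (volume : Measure Ω)]
    (X : Ω → ℝ) (hXmeas : Measurable X) (hXnonneg : ∀ ω, 0 ≤ X ω)
    (g : ℝ → ℝ) (hgmono : MonotoneOn g (Icc 0 1)) (hg0 : g 0 = 0) (hg1 : g 1 = 1)
    (hint : IntegrableOn (fun x => g ((volume {ω | x < X ω}).toReal)) (Ioi 0))
    (n : ℕ) (C d : Fin n → ℝ)
    (hC : ∀ j, 0 ≤ C j) (hd0 : ∀ j, 0 ≤ d j) (hdmono : Monotone d)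
    (hCsum : ∑ j, C j ≤ 1) :
    ∫ y in Ioi (0:ℝ),
        g ((volume {ω | y < ∑ j, C j * max (X ω - d j) 0}).toReal)
      = ∑ j, C j * ∫ x in Ioi (d j), g ((volume {ω | x < X ω}).toReal) :=
  distortion_of_combination_general X g hg0 hint n C d hC hd0
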